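/- If f and g are real-rooted polynomials with nonnegative coefficients such that f interlaces g, then the polynomial (1+z)f + g interlaces the polynomial zf + (1+z)g; that is, the matrix [[1+z, 1],[z, 1+z]] preserves interlacing pairs. -/

import Mathlib

/-!
Interlacing is equivalent to a counting condition: `g ≪ f` iff every upper set `(x, ∞)` or
`[x, ∞)` contains as many roots of `f` as of `g`, or one more. A polynomial with positive leading
coefficient is positive at a non-root `x` iff it has an even number of roots above `x`. Hence if
`p` alternates in sign along a finite set `s`, negative at its top point, parity and monotonicity
force enough roots of `p` above every point of `s`; with `deg p ≤ #s + 1` and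
`#roots ≡ deg p (mod 2)` this makes `p` real-rooted with roots interlacing `s`.

Dividing out the common roots of `f ≪ g` makes the roots of `f` simple and not roots of `g`.
Then `P = (1 + X) f + g` equals `g` on the roots of `f`, so it alternates there and `f ≪ P`; at a
root `w` of `P`, `Q = X f + (1 + X) g` equals `-(1 + w + w²) f(w)`, so `Q` alternates on the roots
of `P` and `P ≪ Q`.
-/

open Polynomial

/-- The roots of a real polynomial, listed in ascending order. -/
noncomputable def ascRoots (p : Polynomial ℝ) : List ℝ := p.roots.sort (· ≤ ·)

/-- A real polynomial is real-rooted if it has as many real roots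
(with multiplicity) as its degree. -/
def RealRooted (p : Polynomial ℝ) : Prop := p.roots.card = p.natDegree

/-- `Interlaces g f` means `g ≪ f`: both are real-rooted, and either they have
equal degrees `d` with roots `v_d ≤ u_d ≤ v_{d-1} ≤ ⋯ ≤ v_1 ≤ u_1`, or
`deg f = deg g + 1 = d` with `u_d ≤ v_{d-1} ≤ ⋯ ≤ v_1 ≤ u_1`, where `u` are the
roots of `f` and `v` are the roots of `g` (here written with ascending
indexing). -/
def Interlaces (g f : Polynomial ℝ) : Prop :=
  RealRooted f ∧ RealRooted g ∧
  ((f.natDegree = g.natDegree ∧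
      (∀ i, i < f.natDegree → (ascRoots g)[i]! ≤ (ascRoots f)[i]!) ∧
      (∀ i, i + 1 < f.natDegree → (ascRoots f)[i]! ≤ (ascRoots g)[i + 1]!)) ∨
   (f.natDegree = g.natDegree + 1 ∧
      (∀ i, i < g.natDegree →
        (ascRoots f)[i]! ≤ (ascRoots g)[i]! ∧ (ascRoots g)[i]! ≤ (ascRoots f)[i + 1]!)))

section Counting

variable {α : Type*}

theorem countP_add_countP_not (l : List α) (U : α → Prop) [DecidablePred U] :
    l.countP (fun x => U x) + l.countP (fun x => ¬ U x) = l.length := by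
  simpa using (l.length_eq_countP_add_countP (fun x => decide (U x))).symm

variable [LinearOrder α]

theorem countP_not_le_iff {l : List α} (hl : l.Pairwise (· ≤ ·)) {U : α → Prop}
    [DecidablePred U] (hU : Monotone U) {i : ℕ} (hi : i < l.length) :
    l.countP (fun x => ¬ U x) ≤ i ↔ U l[i] := by
  induction l generalizing i with
  | nil => simp at hi
  | cons a t ih =>
    obtain ⟨ha, ht⟩ := List.pairwise_cons.1 hl
    by_cases hUa : U a
    · have hall : t.countP (fun x => ¬ U x) = 0 :=
        List.countP_eq_zero.2 fun y hy => by simpa using hU (ha y hy) hUa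
      refine iff_of_true (by rw [List.countP_cons, hall]; simp [hUa]) ?_
      cases i with
      | zero => exact hUa
      | succ j => exact hU (ha _ (List.getElem_mem _)) hUa
    · cases i with
      | zero => simp [hUa]
      | succ j => simpa [List.countP_cons, hUa] using ih ht (i := j) (by simpa using hi)

theorem forall_getElem!_le_iff [Inhabited α] {a b : List α} (ha : a.Pairwise (· ≤ ·))
    (hb : b.Pairwise (· ≤ ·)) {s : ℕ} (hlen : b.length ≤ a.length + s) :
    (∀ i, i < a.length → i + s < b.length → a[i]! ≤ b[i + s]!) ↔
      ∀ (U : α → Prop) [DecidablePred U], Monotone U →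
        a.countP U ≤ b.countP U + (a.length + s - b.length) := by
  constructor
  · intro h U _ hU
    have hb' : b.countP (fun x => ¬ U x) ≤ a.countP (fun x => ¬ U x) + s := by
      set k := a.countP (fun x => ¬ U x)
      by_cases hk : k < a.length ∧ k + s < b.length
      · have hak : U a[k] := (countP_not_le_iff ha hU hk.1).1 le_rfl
        have hab := h k hk.1 hk.2
        rw [getElem!_pos a k hk.1, getElem!_pos b (k + s) hk.2] at hab
        exact (countP_not_le_iff hb hU hk.2).2 (hU hab hak)
      · have := a.countP_le_length (p := fun x => ¬ U x)
        have := b.countP_le_length (p := fun x => ¬ U x)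
        omega
    have := countP_add_countP_not a U
    have := countP_add_countP_not b U
    omega
  · intro h i hi his
    rw [getElem!_pos a i hi, getElem!_pos b (i + s) his]
    have hU : Monotone (a[i] ≤ ·) := fun x y hxy hx => hx.trans hxy
    have hcount := h (a[i] ≤ ·) hU
    have hai := (countP_not_le_iff ha hU hi).2 le_rfl
    have := countP_add_countP_not a (a[i] ≤ ·)
    have := countP_add_countP_not b (a[i] ≤ ·)
    have hbi : b.countP (fun x => ¬ a[i] ≤ x) ≤ i + s := by omega
    exact (countP_not_le_iff hb hU his).1 hbi

theorem countP_le_eq_countP_lt_add_count (t : Multiset α) (r : α) :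
    t.countP (r ≤ ·) = t.countP (r < ·) + t.count r := by
  induction t using Multiset.induction_on with
  | empty => simp
  | cons a t ih =>
    rw [Multiset.countP_cons, Multiset.countP_cons, Multiset.count_cons, ih]
    rcases lt_trichotomy r a with h | rfl | h
    · simp only [h.le, ↓reduceIte, h, h.ne, add_zero]
      omega
    · simp only [le_refl, ↓reduceIte, lt_self_iff_false, add_zero]
      omega
    · simp [not_le.2 h, not_lt.2 h.le, h.ne']

theorem countP_lt_add_countP_gt (t : Multiset α) (r : α) :
    t.countP (· < r) + t.countP (r < ·) + t.count r = Multiset.card t := by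
  rw [Multiset.card_eq_countP_add_countP (· < r), add_assoc, ← countP_le_eq_countP_lt_add_count]
  simp only [not_lt]

theorem countP_le_countP_add_of_parity {s : Finset α} {t : Multiset α} {c : ℕ}
    (hpar : ∀ r ∈ s, (t.countP (r < ·) + c) % 2 ≠ s.1.countP (r < ·) % 2)
    (U : α → Prop) [DecidablePred U] (hU : Monotone U) : s.1.countP U ≤ t.countP U + c := by
  induction s using Finset.induction_on_min generalizing U with
  | empty => simp
  | insert a s has ih =>
    have ha : a ∉ s := fun h => lt_irrefl a (has a h)
    rw [Finset.insert_val_of_notMem ha] at hpar ⊢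
    have ih' := ih (fun r hr => by
      have := hpar r (Finset.mem_insert_of_mem hr)
      rwa [Multiset.countP_cons, if_neg (not_lt.2 (has r hr).le), add_zero] at this)
    rw [Multiset.countP_cons]
    by_cases hUa : U a
    · have hall : s.1.countP U = s.card :=
        Multiset.countP_eq_card.2 fun x hx => hU (has x hx).le hUa
      have hall' : s.1.countP (a < ·) = s.card := Multiset.countP_eq_card.2 has
      have hmono : t.countP (a < ·) ≤ t.countP U := by
        rw [Multiset.countP_eq_card_filter, Multiset.countP_eq_card_filter]
        exact Multiset.card_le_card (Multiset.monotone_filter_right t fun x hx => hU hx.le hUa)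
      have h₁ := ih' (a < ·) fun x y hxy hx => hx.trans_le hxy
      have h₂ := hpar a (Finset.mem_insert_self a s)
      rw [Multiset.countP_cons, if_neg (lt_irrefl a), hall'] at h₂
      rw [if_pos hUa, hall]
      omega
    · rw [if_neg hUa, add_zero]
      exact ih' U hU

theorem countP_le_countP_add_of_parity_of_antitone {s : Finset α} {t : Multiset α} {c : ℕ}
    (hpar : ∀ r ∈ s, (t.countP (· < r) + c) % 2 ≠ s.1.countP (· < r) % 2)
    (D : α → Prop) [hdec : DecidablePred D] (hD : Antitone D) :
    s.1.countP D ≤ t.countP D + c :=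
  @countP_le_countP_add_of_parity αᵒᵈ _ s t c hpar D hdec fun _ _ h => hD h

end Counting

/-- `Interlaced s t` says that every upper set of `ℝ` (encoded as a monotone predicate) contains
as many points of `t` as of `s`, or one more: the points alternate, with a point of `t` on top. -/
def Interlaced (s t : Multiset ℝ) : Prop :=
  ∀ (U : ℝ → Prop) [DecidablePred U], Monotone U →
    s.countP U ≤ t.countP U ∧ t.countP U ≤ s.countP U + 1

theorem pairwise_ascRoots (p : ℝ[X]) : (ascRoots p).Pairwise (· ≤ ·) :=
  Multiset.pairwise_sort _ _

theorem countP_ascRoots (p : ℝ[X]) (U : ℝ → Prop) [DecidablePred U] :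
    (ascRoots p).countP U = p.roots.countP U := by
  rw [← Multiset.coe_countP, ascRoots, Multiset.sort_eq]

theorem length_ascRoots {p : ℝ[X]} (hp : RealRooted p) : (ascRoots p).length = p.natDegree := by
  rw [← hp, ← Multiset.coe_card, ascRoots, Multiset.sort_eq]

theorem forall_ascRoots_le_iff {p q : ℝ[X]} (hp : RealRooted p) (hq : RealRooted q) {s : ℕ}
    (hlen : q.natDegree ≤ p.natDegree + s) :
    (∀ i, i < p.natDegree → i + s < q.natDegree →
        (ascRoots p)[i]! ≤ (ascRoots q)[i + s]!) ↔
      ∀ (U : ℝ → Prop) [DecidablePred U], Monotone U →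
        p.roots.countP U ≤ q.roots.countP U + (p.natDegree + s - q.natDegree) := by
  have h := forall_getElem!_le_iff (pairwise_ascRoots p) (pairwise_ascRoots q) (s := s)
    (by rwa [length_ascRoots hp, length_ascRoots hq])
  simp only [length_ascRoots hp, length_ascRoots hq, countP_ascRoots] at h
  exact h

theorem interlaces_iff {g f : ℝ[X]} :
    Interlaces g f ↔ RealRooted f ∧ RealRooted g ∧ Interlaced g.roots f.roots := by
  constructor
  · rintro ⟨hf, hg, h | h⟩
    · obtain ⟨hd, hgf, hfg⟩ := h
      have c₁ := (forall_ascRoots_le_iff hg hf (s := 0) (by omega)).1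
        (fun i hi _ => by simpa using hgf i (by omega))
      have c₂ := (forall_ascRoots_le_iff hf hg (s := 1) (by omega)).1
        (fun i _ hi => hfg i (by omega))
      refine ⟨hf, hg, fun U _ hU => ?_⟩
      have := c₁ U hU
      have := c₂ U hU
      omega
    · obtain ⟨hd, h⟩ := h
      have c₁ := (forall_ascRoots_le_iff hf hg (s := 0) (by omega)).1
        (fun i _ hi => by simpa using (h i (by omega)).1)
      have c₂ := (forall_ascRoots_le_iff hg hf (s := 1) (by omega)).1
        (fun i hi _ => (h i hi).2)
      refine ⟨hf, hg, fun U _ hU => ?_⟩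
      have := c₁ U hU
      have := c₂ U hU
      omega
  · rintro ⟨hf, hg, h⟩
    have hcard := h (fun _ => True) monotone_const
    simp only [Multiset.countP_True] at hcard
    rw [hf, hg] at hcard
    refine ⟨hf, hg, ?_⟩
    rcases (by omega : f.natDegree = g.natDegree ∨ f.natDegree = g.natDegree + 1) with hd | hd
    · refine Or.inl ⟨hd, fun i hi => ?_, fun i hi => ?_⟩
      · simpa using (forall_ascRoots_le_iff hg hf (s := 0) (by omega)).2
          (fun U _ hU => by have := h U hU; omega) i (by omega) (by omega)
      · exact (forall_ascRoots_le_iff hf hg (s := 1) (by omega)).2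
          (fun U _ hU => by have := h U hU; omega) i (by omega) (by omega)
    · refine Or.inr ⟨hd, fun i hi => ⟨?_, ?_⟩⟩
      · simpa using (forall_ascRoots_le_iff hf hg (s := 0) (by omega)).2
          (fun U _ hU => by have := h U hU; omega) i (by omega) (by omega)
      · exact (forall_ascRoots_le_iff hg hf (s := 1) (by omega)).2
          (fun U _ hU => by have := h U hU; omega) i hi (by omega)

theorem Interlaced.count_and_countP_gt_of_mem_left {s t : Multiset ℝ} (h : Interlaced s t)
    (hdisj : ∀ r ∈ s, r ∉ t) {r : ℝ} (hr : r ∈ s) :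
    s.count r = 1 ∧ t.countP (r < ·) = s.countP (r < ·) + 1 := by
  have h₁ := h (r < ·) fun _ _ hxy hx => hx.trans_le hxy
  have h₂ := h (r ≤ ·) fun _ _ hxy hx => hx.trans hxy
  rw [countP_le_eq_countP_lt_add_count, countP_le_eq_countP_lt_add_count,
    Multiset.count_eq_zero.2 (hdisj r hr)] at h₂
  have := Multiset.count_pos.2 hr
  omega

theorem Interlaced.count_and_countP_gt_of_mem_right {s t : Multiset ℝ} (h : Interlaced s t)
    (hdisj : ∀ r ∈ s, r ∉ t) {r : ℝ} (hr : r ∈ t) :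
    t.count r = 1 ∧ t.countP (r < ·) = s.countP (r < ·) := by
  have h₁ := h (r < ·) fun _ _ hxy hx => hx.trans_le hxy
  have h₂ := h (r ≤ ·) fun _ _ hxy hx => hx.trans hxy
  rw [countP_le_eq_countP_lt_add_count, countP_le_eq_countP_lt_add_count,
    Multiset.count_eq_zero.2 fun hs => hdisj r hs hr] at h₂
  have := Multiset.count_pos.2 hr
  omega

theorem Interlaced.nodup_left {s t : Multiset ℝ} (h : Interlaced s t)
    (hdisj : ∀ r ∈ s, r ∉ t) : s.Nodup :=
  Multiset.nodup_iff_count_eq_one.2 fun _ hr => (h.count_and_countP_gt_of_mem_left hdisj hr).1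

theorem Interlaced.nodup_right {s t : Multiset ℝ} (h : Interlaced s t)
    (hdisj : ∀ r ∈ s, r ∉ t) : t.Nodup :=
  Multiset.nodup_iff_count_eq_one.2 fun _ hr => (h.count_and_countP_gt_of_mem_right hdisj hr).1

theorem interlaced_add_left_iff {c s t : Multiset ℝ} :
    Interlaced (c + s) (c + t) ↔ Interlaced s t := by
  simp only [Interlaced, Multiset.countP_add]
  refine ⟨fun h U _ hU => ?_, fun h U _ hU => ?_⟩ <;>
  · have := h U hU
    omega

theorem eval_pos_of_forall_eval_ne_zero {p : ℝ[X]} (hlc : 0 < p.leadingCoeff)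
    (h : ∀ x, p.eval x ≠ 0) (x : ℝ) : 0 < p.eval x := by
  by_contra hx
  have hneg : p.eval x < 0 := lt_of_le_of_ne (not_lt.1 hx) (h x)
  obtain ⟨y, hxy, hy⟩ : ∃ y, x ≤ y ∧ 0 < p.eval y := by
    by_cases hd : 0 < p.degree
    · have htop := p.tendsto_atTop_of_leadingCoeff_nonneg hd hlc.le
      obtain ⟨y, hy, hxy⟩ :=
        ((htop.eventually_gt_atTop 0).and (Filter.eventually_ge_atTop x)).exists
      exact ⟨y, hxy, hy⟩
    · have hd0 := natDegree_eq_zero_iff_degree_le_zero.2 (not_lt.1 hd)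
      refine ⟨x, le_rfl, ?_⟩
      rwa [eq_C_of_natDegree_eq_zero hd0, eval_C, ← hd0]
  obtain ⟨z, -, hz⟩ := intermediate_value_Icc hxy p.continuous.continuousOn ⟨hneg.le, hy.le⟩
  exact h z hz

theorem even_natDegree_of_forall_eval_ne_zero {p : ℝ[X]} (h : ∀ x, p.eval x ≠ 0) :
    Even p.natDegree := by
  wlog hlc : 0 < p.leadingCoeff generalizing p
  · have hp : p ≠ 0 := fun hp => h 0 (by simp [hp])
    have hneg : 0 < (-p).leadingCoeff := by
      rw [leadingCoeff_neg]
      exact neg_pos.2 (lt_of_le_of_ne (not_lt.1 hlc) (leadingCoeff_ne_zero.2 hp))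
    simpa using this (p := -p) (by simpa using h) hneg
  by_contra hodd
  rw [Nat.not_even_iff_odd] at hodd
  have hq : 0 < (-p.comp (-X)).leadingCoeff := by
    rwa [leadingCoeff_neg, comp_neg_X_leadingCoeff_eq, hodd.neg_one_pow, neg_one_mul, neg_neg]
  have h₁ := eval_pos_of_forall_eval_ne_zero hq (fun x => by simpa using h (-x)) 0
  have h₂ := eval_pos_of_forall_eval_ne_zero hlc h 0
  simp only [eval_neg, eval_comp, eval_X, neg_zero, Left.neg_pos_iff] at h₁
  linarith

theorem exists_prod_multiset_X_sub_C_mul_eval_ne_zero {p : ℝ[X]} (hp : p ≠ 0) :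
    ∃ q : ℝ[X], (p.roots.map fun a => X - C a).prod * q = p ∧
      Multiset.card p.roots + q.natDegree = p.natDegree ∧ ∀ x, q.eval x ≠ 0 := by
  obtain ⟨q, hpq, hdeg, hq⟩ := exists_prod_multiset_X_sub_C_mul p
  have hq0 : q ≠ 0 := by
    rintro rfl
    exact hp (by simpa using hpq.symm)
  exact ⟨q, hpq, hdeg, fun x hx => by simpa [hq] using (mem_roots hq0).2 hx⟩

theorem even_card_roots_iff {p : ℝ[X]} (hp : p ≠ 0) :
    Even (Multiset.card p.roots) ↔ Even p.natDegree := by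
  obtain ⟨q, -, hdeg, hq⟩ := exists_prod_multiset_X_sub_C_mul_eval_ne_zero hp
  rw [← hdeg, Nat.even_add]
  simp [even_natDegree_of_forall_eval_ne_zero hq]

theorem prod_map_sub_pos_iff {s : Multiset ℝ} {x : ℝ} (hx : x ∉ s) :
    0 < (s.map fun r => x - r).prod ↔ Even (s.countP (x < ·)) := by
  induction s using Multiset.induction_on with
  | empty => simp
  | cons a s ih =>
    have hxa : x ≠ a := fun h => hx (h ▸ Multiset.mem_cons_self _ _)
    have hxs : x ∉ s := fun h => hx (Multiset.mem_cons_of_mem h)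
    have hne : (s.map fun r => x - r).prod ≠ 0 :=
      Multiset.prod_ne_zero (by simpa [sub_eq_zero, eq_comm] using hxs)
    rw [Multiset.map_cons, Multiset.prod_cons, Multiset.countP_cons]
    rcases lt_or_gt_of_ne hxa with h | h
    · rw [if_pos h, Nat.even_add_one, ← ih hxs, ← smul_eq_mul,
        smul_pos_iff_of_neg_left (sub_neg.2 h)]
      exact ⟨fun h' => not_lt.2 h'.le, fun h' => lt_of_le_of_ne (not_lt.1 h') hne⟩
    · rw [if_neg (not_lt.2 h.le), add_zero, ← ih hxs, mul_pos_iff_of_pos_left (sub_pos.2 h)]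

theorem eval_pos_iff_even_countP {p : ℝ[X]} (hlc : 0 < p.leadingCoeff) {x : ℝ}
    (hx : p.eval x ≠ 0) : 0 < p.eval x ↔ Even (p.roots.countP (x < ·)) := by
  have hp : p ≠ 0 := leadingCoeff_ne_zero.1 hlc.ne'
  obtain ⟨q, hpq, -, hq⟩ := exists_prod_multiset_X_sub_C_mul_eval_ne_zero hp
  have hqlc : 0 < q.leadingCoeff := by
    rwa [← hpq, leadingCoeff_mul, (monic_multisetProd_X_sub_C _).leadingCoeff, one_mul] at hlc
  have hxr : x ∉ p.roots := fun h => hx (isRoot_of_mem_roots h)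
  have heval : p.eval x = (p.roots.map fun r => x - r).prod * q.eval x := by
    conv_lhs => rw [← hpq]
    simp [eval_multiset_prod]
  rw [heval, mul_pos_iff_of_pos_right (eval_pos_of_forall_eval_ne_zero hqlc hq x),
    prod_map_sub_pos_iff hxr]

theorem realRooted_and_interlaced_of_sign_alternating {p : ℝ[X]} {s : Finset ℝ}
    (hlc : 0 < p.leadingCoeff) (hdeg : p.natDegree ≤ s.card + 1)
    (hsign : ∀ r ∈ s, p.eval r ≠ 0 ∧ (0 < p.eval r ↔ Odd (s.1.countP (r < ·)))) :
    RealRooted p ∧ Interlaced s.1 p.roots := by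
  have hp : p ≠ 0 := leadingCoeff_ne_zero.1 hlc.ne'
  have hpar : ∀ r ∈ s, (p.roots.countP (r < ·) + 0) % 2 ≠ s.1.countP (r < ·) % 2 := by
    intro r hr
    obtain ⟨hne, hiff⟩ := hsign r hr
    have := (eval_pos_iff_even_countP hlc hne).symm.trans hiff
    rw [Nat.even_iff, Nat.odd_iff] at this
    omega
  have hlower := countP_le_countP_add_of_parity hpar
  have hcard : s.card ≤ Multiset.card p.roots := by
    simpa using hlower (fun _ => True) monotone_const
  have hroots : Multiset.card p.roots = p.natDegree := by
    have := card_roots' p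
    have := even_card_roots_iff hp
    rw [Nat.even_iff, Nat.even_iff] at this
    omega
  refine ⟨hroots, fun U _ hU => ⟨by simpa using hlower U hU, ?_⟩⟩
  -- The upper bound is the lower bound for lower sets, with slack `#s + 1 - #roots`.
  have hpar' : ∀ r ∈ s, (p.roots.countP (· < r) + (s.card + 1 - Multiset.card p.roots)) % 2 ≠
      s.1.countP (· < r) % 2 := by
    intro r hr
    have h₁ := hpar r hr
    have h₂ := countP_lt_add_countP_gt p.roots r
    have h₃ := countP_lt_add_countP_gt s.1 r
    rw [Multiset.count_eq_zero.2 fun h => (hsign r hr).1 (isRoot_of_mem_roots h)] at h₂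
    rw [Multiset.count_eq_one_of_mem s.nodup hr] at h₃
    simp only [Finset.card_val] at h₃
    omega
  have hupper := countP_le_countP_add_of_parity_of_antitone hpar' (fun x => ¬ U x)
    fun x y hxy hy hx => hy (hU hxy hx)
  have := Multiset.card_eq_countP_add_countP U p.roots
  have := Multiset.card_eq_countP_add_countP U s.1
  simp only [Finset.card_val] at *
  omega

theorem natDegree_add_eq_max_and_leadingCoeff_pos {p q : ℝ[X]} (hp : 0 < p.leadingCoeff)
    (hq : 0 < q.leadingCoeff) :
    (p + q).natDegree = max p.natDegree q.natDegree ∧ 0 < (p + q).leadingCoeff := by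
  set n := max p.natDegree q.natDegree
  have hcoeff : ∀ r : ℝ[X], 0 < r.leadingCoeff → r.natDegree ≤ n → 0 ≤ r.coeff n := by
    intro r hr hrn
    rcases hrn.eq_or_lt with h | h
    · rw [← h]
      exact hr.le
    · rw [coeff_eq_zero_of_natDegree_lt h]
  have hpos : 0 < (p + q).coeff n := by
    rw [coeff_add]
    rcases max_choice p.natDegree q.natDegree with h | h
    · have := hcoeff q hq (le_max_right _ _)
      rw [show n = p.natDegree from h]
      exact add_pos_of_pos_of_nonneg hp (h ▸ this)
    · have := hcoeff p hp (le_max_left _ _)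
      rw [show n = q.natDegree from h]
      exact add_pos_of_nonneg_of_pos (h ▸ this) hq
  have hdeg := natDegree_eq_of_le_of_coeff_ne_zero (natDegree_add_le p q) hpos.ne'
  exact ⟨hdeg, by rwa [leadingCoeff, hdeg]⟩

theorem natDegree_and_leadingCoeff_X_add_C_mul {p : ℝ[X]} (hp : p ≠ 0) (a : ℝ) :
    ((X + C a) * p).natDegree = p.natDegree + 1 ∧
      ((X + C a) * p).leadingCoeff = p.leadingCoeff := by
  rw [natDegree_mul (X_add_C_ne_zero a) hp, natDegree_X_add_C, leadingCoeff_mul,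
    leadingCoeff_X_add_C, one_mul, add_comm]
  exact ⟨rfl, rfl⟩

theorem natDegree_and_leadingCoeff_one_add_X_mul_add {f g : ℝ[X]} (hf : 0 < f.leadingCoeff)
    (hg : 0 < g.leadingCoeff) :
    ((1 + X) * f + g).natDegree = max (f.natDegree + 1) g.natDegree ∧
      0 < ((1 + X) * f + g).leadingCoeff := by
  obtain ⟨h₁, h₂⟩ := natDegree_and_leadingCoeff_X_add_C_mul
    (leadingCoeff_ne_zero.1 hf.ne') 1
  rw [C_1, add_comm X 1] at h₁ h₂
  rw [← h₁]
  exact natDegree_add_eq_max_and_leadingCoeff_pos (h₂ ▸ hf) hg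

theorem natDegree_and_leadingCoeff_X_mul_add {f g : ℝ[X]} (hf : 0 < f.leadingCoeff)
    (hg : 0 < g.leadingCoeff) :
    (X * f + (1 + X) * g).natDegree = max (f.natDegree + 1) (g.natDegree + 1) ∧
      0 < (X * f + (1 + X) * g).leadingCoeff := by
  obtain ⟨h₁, h₂⟩ := natDegree_and_leadingCoeff_X_add_C_mul
    (leadingCoeff_ne_zero.1 hf.ne') 0
  obtain ⟨h₃, h₄⟩ := natDegree_and_leadingCoeff_X_add_C_mul
    (leadingCoeff_ne_zero.1 hg.ne') 1
  rw [C_0, add_zero] at h₁ h₂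
  rw [C_1, add_comm X 1] at h₃ h₄
  rw [← h₁, ← h₃]
  exact natDegree_add_eq_max_and_leadingCoeff_pos (h₂ ▸ hf) (h₄ ▸ hg)

theorem realRooted_and_interlaced_one_add_X_mul_add {f g : ℝ[X]} (hf : 0 < f.leadingCoeff)
    (hg : 0 < g.leadingCoeff) (hfR : RealRooted f) (hdeg : g.natDegree ≤ f.natDegree + 1)
    (hfg : Interlaced f.roots g.roots) (hdisj : ∀ r ∈ f.roots, r ∉ g.roots) :
    RealRooted ((1 + X) * f + g) ∧ Interlaced f.roots ((1 + X) * f + g).roots := by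
  obtain ⟨hPdeg, hPlc⟩ := natDegree_and_leadingCoeff_one_add_X_mul_add hf hg
  refine realRooted_and_interlaced_of_sign_alternating (s := ⟨f.roots, hfg.nodup_left hdisj⟩)
    hPlc (by unfold RealRooted at hfR; simp only [Finset.card_mk, hfR, hPdeg]; omega) fun r hr => ?_
  have hfr : f.eval r = 0 := isRoot_of_mem_roots hr
  have hgr : g.eval r ≠ 0 := fun h => hdisj r hr ((mem_roots (leadingCoeff_ne_zero.1 hg.ne')).2 h)
  have hPr : ((1 + X) * f + g).eval r = g.eval r := by simp [hfr]
  rw [hPr, eval_pos_iff_even_countP hg hgr, (hfg.count_and_countP_gt_of_mem_left hdisj hr).2,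
    Nat.even_add_one, Nat.not_even_iff_odd]
  exact ⟨hgr, Iff.rfl⟩

theorem realRooted_and_interlaced_X_mul_add {f g : ℝ[X]} (hf : 0 < f.leadingCoeff)
    (hg : 0 < g.leadingCoeff) (hdeg : g.natDegree ≤ f.natDegree + 1)
    (hPR : RealRooted ((1 + X) * f + g)) (hfP : Interlaced f.roots ((1 + X) * f + g).roots)
    (hdisj : ∀ r ∈ f.roots, r ∉ ((1 + X) * f + g).roots) :
    RealRooted (X * f + (1 + X) * g) ∧
      Interlaced ((1 + X) * f + g).roots (X * f + (1 + X) * g).roots := by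
  obtain ⟨hPdeg, -⟩ := natDegree_and_leadingCoeff_one_add_X_mul_add hf hg
  obtain ⟨hQdeg, hQlc⟩ := natDegree_and_leadingCoeff_X_mul_add hf hg
  refine realRooted_and_interlaced_of_sign_alternating
    (s := ⟨_, hfP.nodup_right hdisj⟩) hQlc
    (by unfold RealRooted at hPR; simp only [Finset.card_mk, hPR, hPdeg, hQdeg]; omega)
    fun w hw => ?_
  have hPw : ((1 + X) * f + g).eval w = 0 := isRoot_of_mem_roots hw
  have hfw : f.eval w ≠ 0 :=
    fun h => hdisj w ((mem_roots (leadingCoeff_ne_zero.1 hf.ne')).2 h) hw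
  have hQw : (X * f + (1 + X) * g).eval w = -((1 + w + w ^ 2) * f.eval w) := by
    simp only [eval_add, eval_mul, eval_one, eval_X] at hPw ⊢
    linear_combination (1 + w) * hPw
  have hw2 : 0 < 1 + w + w ^ 2 := by nlinarith [sq_nonneg (w + 1 / 2)]
  have hsign : 0 < (X * f + (1 + X) * g).eval w ↔ ¬ 0 < f.eval w := by
    rw [hQw, neg_pos, ← smul_eq_mul, smul_neg_iff_of_pos_left hw2]
    exact ⟨fun h => not_lt.2 h.le, fun h => lt_of_le_of_ne (not_lt.1 h) hfw⟩
  refine ⟨by rw [hQw]; exact neg_ne_zero.2 (mul_ne_zero hw2.ne' hfw), ?_⟩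
  rw [hsign, eval_pos_iff_even_countP hf hfw, ← (hfP.count_and_countP_gt_of_mem_right hdisj hw).2,
    Nat.not_even_iff_odd]

theorem interlaces_transform_of_roots_disjoint {f g : ℝ[X]} (hf : 0 < f.leadingCoeff)
    (hg : 0 < g.leadingCoeff) (hfg : Interlaces f g) (hdisj : ∀ r ∈ f.roots, r ∉ g.roots) :
    Interlaces ((1 + X) * f + g) (X * f + (1 + X) * g) := by
  obtain ⟨hgR, hfR, hI⟩ := interlaces_iff.1 hfg
  have hdeg : g.natDegree ≤ f.natDegree + 1 := by
    have := (hI (fun _ => True) monotone_const).2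
    rwa [Multiset.countP_True, Multiset.countP_True, hfR, hgR] at this
  obtain ⟨hPR, hfP⟩ := realRooted_and_interlaced_one_add_X_mul_add hf hg hfR hdeg hI hdisj
  have hdisjP : ∀ r ∈ f.roots, r ∉ ((1 + X) * f + g).roots := by
    intro r hrf hrP
    have hfr : f.eval r = 0 := isRoot_of_mem_roots hrf
    have hPr := isRoot_of_mem_roots hrP
    simp only [IsRoot, eval_add, eval_mul, hfr, mul_zero, zero_add] at hPr
    exact hdisj r hrf ((mem_roots (leadingCoeff_ne_zero.1 hg.ne')).2 hPr)
  obtain ⟨hQR, hPQ⟩ := realRooted_and_interlaced_X_mul_add hf hg hdeg hPR hfP hdisjP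
  exact interlaces_iff.2 ⟨hQR, hPR, hPQ⟩

theorem realRooted_X_sub_C (a : ℝ) : RealRooted (X - C a) := by
  simp [RealRooted]

theorem realRooted_mul_iff {h p : ℝ[X]} (hh : RealRooted h) (hh0 : h ≠ 0) (hp : p ≠ 0) :
    RealRooted (h * p) ↔ RealRooted p := by
  unfold RealRooted at *
  rw [roots_mul (mul_ne_zero hh0 hp), Multiset.card_add, natDegree_mul hh0 hp, hh]
  have := card_roots' p
  omega

theorem interlaces_mul_iff {h p q : ℝ[X]} (hh : RealRooted h) (hh0 : h ≠ 0) (hp : p ≠ 0)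
    (hq : q ≠ 0) : Interlaces (h * p) (h * q) ↔ Interlaces p q := by
  rw [interlaces_iff, interlaces_iff, realRooted_mul_iff hh hh0 hp, realRooted_mul_iff hh hh0 hq,
    roots_mul (mul_ne_zero hh0 hp), roots_mul (mul_ne_zero hh0 hq), interlaced_add_left_iff]

theorem exists_eq_mul_roots_disjoint {f g : ℝ[X]} (hf : f ≠ 0) (hg : g ≠ 0) :
    ∃ h f₁ g₁ : ℝ[X], h.Monic ∧ RealRooted h ∧ f = h * f₁ ∧ g = h * g₁ ∧
      ∀ r ∈ f₁.roots, r ∉ g₁.roots := by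
  set c := f.roots ∩ g.roots
  set h := (c.map fun a => X - C a).prod
  have hh : h.Monic := monic_multisetProd_X_sub_C c
  obtain ⟨f₁, hf₁⟩ := (c.prod_X_sub_C_dvd_iff_le_roots hf).2 Multiset.inter_le_left
  obtain ⟨g₁, hg₁⟩ := (c.prod_X_sub_C_dvd_iff_le_roots hg).2 Multiset.inter_le_right
  have hroots : ∀ {p p₁ : ℝ[X]}, p ≠ 0 → p = h * p₁ → p.roots = c + p₁.roots := by
    intro p p₁ hp hpp₁
    rw [hpp₁] at hp ⊢
    rw [roots_mul hp, roots_multiset_prod_X_sub_C]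
  refine ⟨h, f₁, g₁, hh, ?_, hf₁, hg₁, fun r hrf hrg => ?_⟩
  · rw [RealRooted, roots_multiset_prod_X_sub_C, natDegree_multiset_prod_X_sub_C_eq_card]
  · have h₁ := congrArg (Multiset.count r) (hroots hf hf₁)
    have h₂ := congrArg (Multiset.count r) (hroots hg hg₁)
    have h₃ : c.count r = min (f.roots.count r) (g.roots.count r) := Multiset.count_inter ..
    have := Multiset.count_pos.2 hrf
    have := Multiset.count_pos.2 hrg
    simp only [Multiset.count_add] at h₁ h₂
    omega

theorem interlaces_transform_of_leadingCoeff_pos {f g : ℝ[X]} (hf : 0 < f.leadingCoeff)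
    (hg : 0 < g.leadingCoeff) (hfg : Interlaces f g) :
    Interlaces ((1 + X) * f + g) (X * f + (1 + X) * g) := by
  have hne : ∀ {p : ℝ[X]}, 0 < p.leadingCoeff → p ≠ 0 := fun hp =>
    leadingCoeff_ne_zero.1 hp.ne'
  obtain ⟨h, f₁, g₁, hmonic, hh, rfl, rfl, hdisj⟩ :=
    exists_eq_mul_roots_disjoint (hne hf) (hne hg)
  rw [leadingCoeff_mul, hmonic.leadingCoeff, one_mul] at hf hg
  have key := interlaces_transform_of_roots_disjoint hf hg
    ((interlaces_mul_iff hh hmonic.ne_zero (hne hf) (hne hg)).1 hfg) hdisj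
  rw [← interlaces_mul_iff hh hmonic.ne_zero
    (hne (natDegree_and_leadingCoeff_one_add_X_mul_add hf hg).2)
    (hne (natDegree_and_leadingCoeff_X_mul_add hf hg).2)] at key
  convert key using 1 <;> ring

theorem interlaces_X_sub_C_mul {p : ℝ[X]} (hp : RealRooted p) (a : ℝ) :
    Interlaces p ((X - C a) * p) := by
  rcases eq_or_ne p 0 with rfl | hp0
  · rw [mul_zero, interlaces_iff, roots_zero]
    exact ⟨hp, hp, fun U _ _ => by simp⟩
  rw [interlaces_iff, realRooted_mul_iff (realRooted_X_sub_C a) (X_sub_C_ne_zero a) hp0,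
    roots_mul (mul_ne_zero (X_sub_C_ne_zero a) hp0), roots_X_sub_C]
  refine ⟨hp, hp, fun U _ _ => ?_⟩
  have := Multiset.countP_le_card U {a}
  rw [Multiset.countP_add, Multiset.card_singleton] at *
  omega

theorem interlaces_X_sub_C {a b : ℝ} (hab : a ≤ b) : Interlaces (X - C a) (X - C b) := by
  rw [interlaces_iff, roots_X_sub_C, roots_X_sub_C]
  refine ⟨realRooted_X_sub_C b, realRooted_X_sub_C a, fun U _ hU => ?_⟩
  simp only [← Multiset.cons_zero, Multiset.countP_cons, Multiset.countP_zero, zero_add]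
  have := @hU a b hab
  split_ifs <;> simp_all

theorem stmt2_general (f g : Polynomial ℝ)
    (hf' : ∀ i, 0 ≤ f.coeff i) (hg' : ∀ i, 0 ≤ g.coeff i)
    (hfg : Interlaces f g) :
    Interlaces ((1 + X) * f + g) (X * f + (1 + X) * g) := by
  rcases eq_or_ne f 0 with rfl | hf
  · simpa [sub_eq_add_neg, add_comm] using interlaces_X_sub_C_mul hfg.1 (-1)
  rcases eq_or_ne g 0 with rfl | hg
  · have hdeg : f.natDegree = 0 := by
      rcases hfg.2.2 with ⟨hd, -⟩ | ⟨hd, -⟩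
      · simpa using hd.symm
      · simp at hd
    rw [eq_C_of_natDegree_eq_zero hdeg] at hf ⊢
    have key := (interlaces_mul_iff (by simp [RealRooted]) hf (X_sub_C_ne_zero (-1))
      (X_sub_C_ne_zero 0)).2 (interlaces_X_sub_C (by norm_num))
    convert key using 1 <;> simp only [map_neg, C_0, sub_neg_eq_add, sub_zero, add_zero, C_1]
    all_goals ring
  have hlc : ∀ {p : ℝ[X]}, p ≠ 0 → (∀ i, 0 ≤ p.coeff i) → 0 < p.leadingCoeff :=
    fun hp h => lt_of_le_of_ne (h _) (leadingCoeff_ne_zero.2 hp).symm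
  exact interlaces_transform_of_leadingCoeff_pos (hlc hf hf') (hlc hg hg') hfg

theorem stmt2 (f g : Polynomial ℝ)
    (hf : RealRooted f) (hg : RealRooted g)
    (hf' : ∀ i, 0 ≤ f.coeff i) (hg' : ∀ i, 0 ≤ g.coeff i)
    (hfg : Interlaces f g) :
    Interlaces ((1 + X) * f + g) (X * f + (1 + X) * g) :=
  stmt2_general f g hf' hg' hfg
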